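/- arXiv:1205.2789 — 4 statements merged into one kernel-verified Lean document; each statement's English description precedes it below -/
import Mathlib

section
/- Inversion of the correlation-function map: let (f_m)_{m≥0} be a family of Borel functions f_m : Γ_m → ℝ with |f_m(z_m)| ≤ A ∏_{j=1}^m h_β(p_j) for fixed A, β > 0, and define ρ_n(z_n) = Σ_{k=0}^∞ (1/k!) ∫_{Γ_k(z_n)} f_{n+k}(z_n, z_{n+1}, …, z_{n+k}) dz_{n+1}⋯dz_{n+k}. Then for every n ≥ 0 and every z_n ∈ Γ_n the series Σ_{k=0}^∞ ((−1)^k/k!) ∫_{Γ_k(z_n)} ρ_{n+k}(z_n, z_{n+1}, …, z_{n+k}) dz_{n+1}⋯dz_{n+k} converges absolutely and equals f_n(z_n). -/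
open MeasureTheory
open scoped ENNReal

noncomputable section

/-- Position/momentum space `ℝ³`. -/
abbrev R3 : Type := EuclideanSpace ℝ (Fin 3)

/-- The `n`-particle hard-sphere phase space `Γ_n`. -/
def HSGamma (a : ℝ) (Λ : Set R3) (n : ℕ) : Set (Fin n → R3 × R3) :=
  {z | (∀ i, (z i).1 ∈ Λ) ∧ (∀ i, ∀ q ∈ frontier Λ, a / 2 ≤ dist (z i).1 q) ∧
       (∀ i j, i ≠ j → a ≤ dist (z i).1 (z j).1)}

/-- `Γ_k(z_n) = {y : (z_n, y) ∈ Γ_{n+k}}`. -/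
def gammaExt (a : ℝ) (Λ : Set R3) (n k : ℕ) (z : Fin n → R3 × R3) :
    Set (Fin k → R3 × R3) :=
  {y | Fin.append z y ∈ HSGamma a Λ (n + k)}

/-- The normalized Maxwellian `h_β(p) = (β/(2π))^{3/2} e^{−β|p|²/2}`. -/
noncomputable def maxw (β : ℝ) (p : R3) : ℝ :=
  (β / (2 * Real.pi)) ^ ((3 : ℝ) / 2) * Real.exp (-β * ‖p‖ ^ 2 / 2)

/-- The grand canonical correlation functions
`ρ_n(z_n) = Σ_k (1/k!) ∫_{Γ_k(z_n)} f_{n+k}(z_n, y) dy`. -/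
noncomputable def corrGC (a : ℝ) (Λ : Set R3)
    (f : (m : ℕ) → (Fin m → R3 × R3) → ℝ) (n : ℕ) (z : Fin n → R3 × R3) : ℝ :=
  ∑' k : ℕ, (k.factorial : ℝ)⁻¹ *
    ∫ y in gammaExt a Λ n k z, f (n + k) (Fin.append z y)

/-!
Since at most finitely many disjoint balls of radius `a / 2` fit around the bounded set `Λ`,
`Γ_m = ∅` for large `m`, so every series in sight is a finite sum. Splitting a point of
`Γ_{k+j}(z)` as `(y, w)` with `y ∈ Γ_k(z)`, `w ∈ Γ_j(z, y)`, Fubini gives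
`∫_{Γ_k(z)} ρ_{n+k}(z, y) dy = Σ_j J_{k+j} / j!` with `J_m = ∫_{Γ_m(z)} f_{n+m}(z, u) du`.
The alternating sum then collapses to `J_0 = f_n(z)`, because
`Σ_{k+j=m} (-1)^k / (k! j!) = (1 - 1)^m / m!`.
-/

-- Without it, instance search fails to find `SigmaFinite volume` on `Fin m → R3 × R3`.
instance : SigmaFinite (volume : Measure (R3 × R3)) := inferInstance

section FinAppend

variable {X : Type*}

def MeasurableEquiv.finAppend [MeasurableSpace X] (k j : ℕ) :
    (Fin k → X) × (Fin j → X) ≃ᵐ (Fin (k + j) → X) :=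
  (MeasurableEquiv.sumPiEquivProdPi fun _ : Fin k ⊕ Fin j => X).symm.trans
    (MeasurableEquiv.piCongrLeft (fun _ => X) finSumFinEquiv)

@[simp]
theorem MeasurableEquiv.finAppend_apply [MeasurableSpace X] (k j : ℕ)
    (p : (Fin k → X) × (Fin j → X)) :
    MeasurableEquiv.finAppend k j p = Fin.append p.1 p.2 := by
  funext i
  refine Fin.addCases (fun i => ?_) (fun i => ?_) i
  · rw [Fin.append_left, ← finSumFinEquiv_apply_left]
    exact Equiv.piCongrLeft_apply_apply (P := fun _ => X) (e := finSumFinEquiv) _ _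
  · rw [Fin.append_right, ← finSumFinEquiv_apply_right]
    exact Equiv.piCongrLeft_apply_apply (P := fun _ => X) (e := finSumFinEquiv) _ _

theorem measurable_finAppend_left [MeasurableSpace X] {n k : ℕ} (z : Fin n → X) :
    Measurable fun y : Fin k → X => Fin.append z y := by
  have := (MeasurableEquiv.finAppend n k).measurable.comp (measurable_prodMk_left (x := z))
  simpa [Function.comp_def] using this

theorem apply_comp_finCast {β : Type*} (F : (m : ℕ) → (Fin m → X) → β) {m m' : ℕ}
    (h : m = m') (v : Fin m' → X) : F m (v ∘ Fin.cast h) = F m' v := by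
  subst h; rfl

theorem apply_append_append {β : Type*} (F : (m : ℕ) → (Fin m → X) → β) {n k j : ℕ}
    (z : Fin n → X) (y : Fin k → X) (w : Fin j → X) :
    F (n + k + j) (Fin.append (Fin.append z y) w) =
      F (n + (k + j)) (Fin.append z (Fin.append y w)) := by
  rw [Fin.append_assoc, apply_comp_finCast F]

variable [MeasureSpace X] [SigmaFinite (volume : Measure X)]

theorem measurePreserving_finAppend (k j : ℕ) :
    MeasurePreserving (MeasurableEquiv.finAppend (X := X) k j) volume volume :=
  (volume_measurePreserving_piCongrLeft (fun _ => X) finSumFinEquiv).comp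
    (volume_measurePreserving_sumPiEquivProdPi_symm fun _ => X)

theorem integrable_comp_finAppend {k j : ℕ} {F : (Fin (k + j) → X) → ℝ} (hF : Integrable F) :
    Integrable fun p : (Fin k → X) × (Fin j → X) => F (Fin.append p.1 p.2) := by
  simpa [Function.comp_def] using ((measurePreserving_finAppend k j).integrable_comp_emb
    (MeasurableEquiv.finAppend k j).measurableEmbedding).2 hF

theorem integral_integral_finAppend {k j : ℕ} {F : (Fin (k + j) → X) → ℝ}
    (hF : Integrable F) : ∫ y, ∫ w, F (Fin.append y w) = ∫ u, F u :=
  calc ∫ y, ∫ w, F (Fin.append y w)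
        = ∫ p : (Fin k → X) × (Fin j → X), F (Fin.append p.1 p.2) :=
        (integral_prod _ (integrable_comp_finAppend hF)).symm
    _ = ∫ p, F (MeasurableEquiv.finAppend k j p) := by simp
    _ = ∫ u, F u := (measurePreserving_finAppend k j).integral_comp' _

end FinAppend

theorem TotallyBounded.exists_card_le_of_pairwise_le_dist {E : Type*} [PseudoMetricSpace E]
    {s : Set E} (hs : TotallyBounded s) {r : ℝ} (hr : 0 < r) :
    ∃ N : ℕ, ∀ (m : ℕ) (x : Fin m → E), (∀ i, x i ∈ s) →
      Pairwise (fun i j => r ≤ dist (x i) (x j)) → m ≤ N := by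
  obtain ⟨t, ht, hcover⟩ := Metric.totallyBounded_iff.1 hs (r / 2) (half_pos hr)
  refine ⟨ht.toFinset.card, fun m x hxs hsep => ?_⟩
  have hcenter : ∀ i, ∃ c ∈ t, x i ∈ Metric.ball c (r / 2) := fun i => by
    simpa using hcover (hxs i)
  choose c hct hball using hcenter
  -- two points within `r / 2` of the same centre are closer than `r`
  have hinj : Function.Injective c := fun i j hij => by
    by_contra hne
    have := (hsep hne).trans (dist_triangle_right _ _ (c i))
    have := Metric.mem_ball.1 (hball i)
    have := Metric.mem_ball.1 (hball j)
    rw [hij] at *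
    linarith
  simpa using Finset.card_le_card_of_injOn (s := Finset.univ) c
    (fun i _ => ht.mem_toFinset.2 (hct i)) hinj.injOn

theorem exists_HSGamma_eq_empty {a : ℝ} (ha : 0 < a) {Λ : Set R3}
    (hΛb : Bornology.IsBounded Λ) : ∃ N : ℕ, ∀ m, N < m → HSGamma a Λ m = ∅ := by
  obtain ⟨N, hN⟩ := (hΛb.isCompact_closure.totallyBounded.subset
    subset_closure).exists_card_le_of_pairwise_le_dist ha
  refine ⟨N, fun m hm => Set.eq_empty_of_forall_notMem fun z hz => ?_⟩
  have := hN m (fun i => (z i).1) hz.1 fun i j hij => hz.2.2 i j hij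
  omega

theorem measurableSet_HSGamma (a : ℝ) {Λ : Set R3} (hΛ : MeasurableSet Λ) (m : ℕ) :
    MeasurableSet (HSGamma a Λ m) := by
  have hpos : MeasurableSet {z : Fin m → R3 × R3 | ∀ i, (z i).1 ∈ Λ} := by
    simp only [Set.ofPred_forall]
    exact .iInter fun i => (measurable_pi_apply i).fst hΛ
  have hwall :
      IsClosed {z : Fin m → R3 × R3 | ∀ i, ∀ q ∈ frontier Λ, a / 2 ≤ dist (z i).1 q} := by
    simp only [Set.ofPred_forall]
    exact isClosed_iInter fun i => isClosed_iInter fun q => isClosed_iInter fun _ =>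
      isClosed_le continuous_const (by fun_prop)
  have hcore :
      IsClosed {z : Fin m → R3 × R3 | ∀ i j, i ≠ j → a ≤ dist (z i).1 (z j).1} := by
    simp only [Set.ofPred_forall]
    exact isClosed_iInter fun i => isClosed_iInter fun j => isClosed_iInter fun _ =>
      isClosed_le continuous_const (by fun_prop)
  exact hpos.inter (hwall.measurableSet.inter hcore.measurableSet)

theorem measurableSet_gammaExt (a : ℝ) {Λ : Set R3} (hΛ : MeasurableSet Λ) (n k : ℕ)
    (z : Fin n → R3 × R3) : MeasurableSet (gammaExt a Λ n k z) :=
  measurable_finAppend_left z (measurableSet_HSGamma a hΛ (n + k))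

theorem mem_HSGamma_of_append_mem {a : ℝ} {Λ : Set R3} {n k : ℕ} {z : Fin n → R3 × R3}
    {y : Fin k → R3 × R3} (h : Fin.append z y ∈ HSGamma a Λ (n + k)) :
    z ∈ HSGamma a Λ n := by
  obtain ⟨hpos, hwall, hcore⟩ := h
  refine ⟨fun i => ?_, fun i => ?_, fun i j hij => ?_⟩
  · simpa using hpos (Fin.castAdd k i)
  · simpa using hwall (Fin.castAdd k i)
  · simpa using hcore (Fin.castAdd k i) (Fin.castAdd k j) (by simpa using hij)

theorem gammaExt_eq_empty {a : ℝ} {Λ : Set R3} {N : ℕ}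
    (hN : ∀ m, N < m → HSGamma a Λ m = ∅) {n k : ℕ} (hk : N < n + k) (z : Fin n → R3 × R3) :
    gammaExt a Λ n k z = ∅ := by
  simp [gammaExt, hN _ hk]

theorem gammaExt_zero {a : ℝ} {Λ : Set R3} {n : ℕ} {z : Fin n → R3 × R3}
    (hz : z ∈ HSGamma a Λ n) : gammaExt a Λ n 0 z = Set.univ := by
  refine Set.eq_univ_of_forall fun y => ?_
  rw [gammaExt, Set.mem_ofPred_eq, Subsingleton.elim y Fin.elim0, Fin.append_elim0]
  exact (apply_comp_finCast (fun m v => v ∈ HSGamma a Λ m) (Nat.add_zero n) z).mpr hz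

theorem append_mem_gammaExt_add_iff {a : ℝ} {Λ : Set R3} {n k j : ℕ} {z : Fin n → R3 × R3}
    {y : Fin k → R3 × R3} {w : Fin j → R3 × R3} :
    Fin.append y w ∈ gammaExt a Λ n (k + j) z ↔
      y ∈ gammaExt a Λ n k z ∧ w ∈ gammaExt a Λ (n + k) j (Fin.append z y) := by
  have := apply_append_append (fun m v => v ∈ HSGamma a Λ m) z y w
  simp only [gammaExt, Set.mem_ofPred_eq] at this ⊢
  rw [← this]
  exact ⟨fun h => ⟨mem_HSGamma_of_append_mem h, h⟩, And.right⟩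

theorem integrable_maxw {β : ℝ} (hβ : 0 < β) : Integrable (maxw β) := by
  have hgauss : Integrable fun p : R3 => Real.exp (-(β / 2) * ‖p‖ ^ 2) := by
    refine .of_integral_ne_zero ?_
    rw [GaussianFourier.integral_rexp_neg_mul_sq_norm (half_pos hβ)]
    exact (Real.rpow_pos_of_pos (div_pos Real.pi_pos (half_pos hβ)) _).ne'
  refine (hgauss.const_mul ((β / (2 * Real.pi)) ^ ((3 : ℝ) / 2))).congr
    (ae_of_all _ fun p => ?_)
  rw [maxw]
  ring_nf

theorem integrable_indicator_mul_maxw {β : ℝ} (hβ : 0 < β) {Λ : Set R3}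
    (hΛ : MeasurableSet Λ) (hΛb : Bornology.IsBounded Λ) :
    Integrable fun x : R3 × R3 => Λ.indicator 1 x.1 * maxw β x.2 := by
  refine Integrable.mul_prod ?_ (integrable_maxw hβ)
  exact (integrable_indicator_iff hΛ).2 (integrableOn_const hΛb.measure_lt_top.ne)

theorem integrableOn_gammaExt_of_abs_le {a β C : ℝ} (hβ : 0 < β) {Λ : Set R3}
    (hΛ : MeasurableSet Λ) (hΛb : Bornology.IsBounded Λ) {n m : ℕ} (z : Fin n → R3 × R3)
    {g : (Fin (n + m) → R3 × R3) → ℝ} (hg : Measurable g)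
    (hgb : ∀ v ∈ HSGamma a Λ (n + m), |g v| ≤ C * ∏ i, maxw β (v i).2) :
    IntegrableOn (fun u => g (Fin.append z u)) (gammaExt a Λ n m z) := by
  have hdom : Integrable fun u : Fin m → R3 × R3 =>
      (C * ∏ i, maxw β (z i).2) * ∏ i, Λ.indicator 1 (u i).1 * maxw β (u i).2 :=
    (Integrable.fintype_prod fun _ => integrable_indicator_mul_maxw hβ hΛ hΛb).const_mul _
  refine hdom.integrableOn.mono' (hg.comp (measurable_finAppend_left z)).aestronglyMeasurable
    ((ae_restrict_iff' (measurableSet_gammaExt a hΛ n m z)).2 (ae_of_all _ fun u hu => ?_))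
  have hΛu : ∀ i, (u i).1 ∈ Λ := fun i => by simpa using hu.1 (Fin.natAdd n i)
  calc ‖g (Fin.append z u)‖ ≤ C * ∏ i, maxw β (Fin.append z u i).2 := hgb _ hu
    _ = (C * ∏ i, maxw β (z i).2) * ∏ i, Λ.indicator 1 (u i).1 * maxw β (u i).2 := by
      simp [Fin.prod_univ_add, hΛu, mul_assoc]

section Fubini

variable {a : ℝ} {Λ : Set R3} {n k j : ℕ} {z : Fin n → R3 × R3}

theorem integral_indicator_gammaExt_append (hΛ : MeasurableSet Λ)
    (g : (Fin (k + j) → R3 × R3) → ℝ) (y : Fin k → R3 × R3) :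
    ∫ w, (gammaExt a Λ n (k + j) z).indicator g (Fin.append y w) =
      (gammaExt a Λ n k z).indicator
        (fun y => ∫ w in gammaExt a Λ (n + k) j (Fin.append z y), g (Fin.append y w)) y := by
  by_cases hy : y ∈ gammaExt a Λ n k z
  · rw [Set.indicator_of_mem hy,
      ← integral_indicator (measurableSet_gammaExt a hΛ (n + k) j (Fin.append z y))]
    congr 1 with w
    by_cases hw : w ∈ gammaExt a Λ (n + k) j (Fin.append z y)
    · rw [Set.indicator_of_mem hw,
        Set.indicator_of_mem (append_mem_gammaExt_add_iff.2 ⟨hy, hw⟩)]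
    · rw [Set.indicator_of_notMem hw,
        Set.indicator_of_notMem fun h => hw (append_mem_gammaExt_add_iff.1 h).2]
  · simp [append_mem_gammaExt_add_iff, hy]

theorem integrableOn_setIntegral_gammaExt (hΛ : MeasurableSet Λ)
    {g : (Fin (k + j) → R3 × R3) → ℝ} (hg : IntegrableOn g (gammaExt a Λ n (k + j) z)) :
    IntegrableOn (fun y => ∫ w in gammaExt a Λ (n + k) j (Fin.append z y), g (Fin.append y w))
      (gammaExt a Λ n k z) := by
  have := (integrable_comp_finAppend ((integrable_indicator_iff
    (measurableSet_gammaExt a hΛ n (k + j) z)).2 hg)).integral_prod_left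
  simp only [integral_indicator_gammaExt_append hΛ] at this
  exact (integrable_indicator_iff (measurableSet_gammaExt a hΛ n k z)).1 this

theorem setIntegral_gammaExt_setIntegral_gammaExt (hΛ : MeasurableSet Λ)
    {g : (Fin (k + j) → R3 × R3) → ℝ} (hg : IntegrableOn g (gammaExt a Λ n (k + j) z)) :
    ∫ y in gammaExt a Λ n k z,
        ∫ w in gammaExt a Λ (n + k) j (Fin.append z y), g (Fin.append y w) =
      ∫ u in gammaExt a Λ n (k + j) z, g u := by
  have := integral_integral_finAppend
    ((integrable_indicator_iff (measurableSet_gammaExt a hΛ n (k + j) z)).2 hg)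
  simp only [integral_indicator_gammaExt_append hΛ] at this
  rwa [integral_indicator (measurableSet_gammaExt a hΛ n k z),
    integral_indicator (measurableSet_gammaExt a hΛ n (k + j) z)] at this

end Fubini

open Finset Nat in
theorem sum_range_neg_one_pow_div_factorial_mul_inv_factorial (m : ℕ) :
    ∑ k ∈ range (m + 1), (-1 : ℝ) ^ k / k ! * ((m - k)! : ℝ)⁻¹ = (0 : ℝ) ^ m / m ! := by
  have hbinom := add_pow (-1 : ℝ) 1 m
  rw [neg_add_cancel] at hbinom
  rw [hbinom, sum_div]
  refine sum_congr rfl fun k hk => ?_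
  rw [one_pow, mul_one, cast_choose ℝ (Nat.lt_succ_iff.1 (mem_range.1 hk))]
  field_simp

open Finset Nat in
theorem sum_range_alternating_mul_sum_range_inv_factorial {J : ℕ → ℝ} {K : ℕ}
    (hJ : ∀ m, K ≤ m → J m = 0) :
    ∑ k ∈ range K, (-1 : ℝ) ^ k / k ! * ∑ j ∈ range K, (j ! : ℝ)⁻¹ * J (k + j) = J 0 := by
  have htrunc : ∀ k ∈ range K, ∑ j ∈ range K, (j ! : ℝ)⁻¹ * J (k + j) =
      ∑ j ∈ range (K - k), (j ! : ℝ)⁻¹ * J (k + j) := fun k hk =>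
    (sum_subset (range_subset_range.2 (Nat.sub_le K k)) fun j _ hj => by
      rw [hJ _ (by simp at hj; omega), mul_zero]).symm
  rw [sum_congr rfl fun k hk => by rw [htrunc k hk, mul_sum]]
  rw [← sum_range_diag_flip K fun k j => (-1 : ℝ) ^ k / k ! * ((j ! : ℝ)⁻¹ * J (k + j))]
  have hdiag : ∀ m ∈ range K, ∑ k ∈ range (m + 1),
      (-1 : ℝ) ^ k / k ! * (((m - k)! : ℝ)⁻¹ * J (k + (m - k))) = (0 : ℝ) ^ m / m ! * J m :=
    fun m _ => by
      rw [← sum_range_neg_one_pow_div_factorial_mul_inv_factorial, sum_mul]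
      refine sum_congr rfl fun k hk => ?_
      rw [Nat.add_sub_cancel' (Nat.lt_succ_iff.1 (mem_range.1 hk)), mul_assoc]
  rw [sum_congr rfl hdiag]
  rcases K with _ | K
  · simp [hJ 0 le_rfl]
  · simp [sum_range_succ']

theorem setIntegral_gammaExt_zero {a : ℝ} {Λ : Set R3} {n : ℕ} {z : Fin n → R3 × R3}
    (hz : z ∈ HSGamma a Λ n) (F : (m : ℕ) → (Fin m → R3 × R3) → ℝ) :
    ∫ u in gammaExt a Λ n 0 z, F (n + 0) (Fin.append z u) = F n z := by
  rw [gammaExt_zero hz, Measure.restrict_univ, volume_pi,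
    Measure.pi_of_empty (x := Fin.elim0), integral_dirac, Fin.append_elim0,
    apply_comp_finCast F]

theorem hasSum_mul_setIntegral_gammaExt {a : ℝ} {Λ : Set R3} {N : ℕ}
    (hN : ∀ m, N < m → HSGamma a Λ m = ∅) {n : ℕ} (z : Fin n → R3 × R3) (c : ℕ → ℝ)
    (G : (k : ℕ) → (Fin k → R3 × R3) → ℝ) :
    HasSum (fun k => c k * ∫ y in gammaExt a Λ n k z, G k y)
      (∑ k ∈ Finset.range (N + 1), c k * ∫ y in gammaExt a Λ n k z, G k y) :=
  hasSum_sum_of_ne_finset_zero fun k hk => by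
    rw [gammaExt_eq_empty hN (by simp at hk; omega), setIntegral_empty, mul_zero]

theorem setIntegral_corrGC_gammaExt {a : ℝ} {Λ : Set R3} (hΛ : MeasurableSet Λ) {N : ℕ}
    (hN : ∀ m, N < m → HSGamma a Λ m = ∅) (f : (m : ℕ) → (Fin m → R3 × R3) → ℝ) {n k : ℕ}
    (z : Fin n → R3 × R3)
    (hf : ∀ j, IntegrableOn (fun u => f (n + (k + j)) (Fin.append z u))
      (gammaExt a Λ n (k + j) z)) :
    ∫ y in gammaExt a Λ n k z, corrGC a Λ f (n + k) (Fin.append z y) =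
      ∑ j ∈ Finset.range (N + 1), (j.factorial : ℝ)⁻¹ *
        ∫ u in gammaExt a Λ n (k + j) z, f (n + (k + j)) (Fin.append z u) := by
  have hcorr : ∀ y, corrGC a Λ f (n + k) (Fin.append z y) = ∑ j ∈ Finset.range (N + 1),
      (j.factorial : ℝ)⁻¹ * ∫ w in gammaExt a Λ (n + k) j (Fin.append z y),
        f (n + (k + j)) (Fin.append z (Fin.append y w)) := fun y => by
    simp_rw [← apply_append_append f]
    exact (hasSum_mul_setIntegral_gammaExt hN _ _ _).tsum_eq
  rw [integral_congr_ae (ae_of_all _ hcorr), integral_finsetSum _ fun j _ =>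
    (integrableOn_setIntegral_gammaExt hΛ (hf j)).const_mul _]
  refine Finset.sum_congr rfl fun j _ => ?_
  rw [integral_const_mul, setIntegral_gammaExt_setIntegral_gammaExt hΛ (hf j)]

theorem stmt5_general (a : ℝ) (ha : 0 < a) (Λ : Set R3) (hΛo : IsOpen Λ)
    (hΛb : Bornology.IsBounded Λ)
    (f : (m : ℕ) → (Fin m → R3 × R3) → ℝ) (hf : ∀ m, Measurable (f m))
    (A β : ℝ) (hβ : 0 < β)
    (hbound : ∀ m, ∀ w ∈ HSGamma a Λ m, |f m w| ≤ A * ∏ j, maxw β (w j).2)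
    (n : ℕ) (z : Fin n → R3 × R3) (hz : z ∈ HSGamma a Λ n) :
    Summable (fun k : ℕ => (k.factorial : ℝ)⁻¹ *
      ∫ y in gammaExt a Λ n k z, |corrGC a Λ f (n + k) (Fin.append z y)|) ∧
    (∑' k : ℕ, ((-1 : ℝ) ^ k / (k.factorial : ℝ)) *
      ∫ y in gammaExt a Λ n k z, corrGC a Λ f (n + k) (Fin.append z y)) = f n z := by
  obtain ⟨N, hN⟩ := exists_HSGamma_eq_empty ha hΛb
  have hΛ := hΛo.measurableSet
  have hint : ∀ m, IntegrableOn (fun u => f (n + m) (Fin.append z u)) (gammaExt a Λ n m z) :=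
    fun m => integrableOn_gammaExt_of_abs_le hβ hΛ hΛb z (hf _) (hbound _)
  refine ⟨(hasSum_mul_setIntegral_gammaExt hN z _ _).summable, ?_⟩
  rw [(hasSum_mul_setIntegral_gammaExt hN z _ _).tsum_eq]
  simp_rw [setIntegral_corrGC_gammaExt hΛ hN f z fun j => hint _]
  rw [sum_range_alternating_mul_sum_range_inv_factorial
    (J := fun m => ∫ u in gammaExt a Λ n m z, f (n + m) (Fin.append z u)) fun m hm => by
      rw [gammaExt_eq_empty hN (show N < n + m by omega), setIntegral_empty]]
  exact setIntegral_gammaExt_zero hz f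

/-- Inversion of the correlation-function map: for every `n` and `z_n ∈ Γ_n` the series
`Σ_k ((−1)^k/k!) ∫_{Γ_k(z_n)} ρ_{n+k}(z_n, y) dy` converges absolutely and equals
`f_n(z_n)`. -/
theorem stmt5 (a : ℝ) (ha : 0 < a) (Λ : Set R3) (hΛo : IsOpen Λ)
    (hΛb : Bornology.IsBounded Λ)
    (f : (m : ℕ) → (Fin m → R3 × R3) → ℝ) (hf : ∀ m, Measurable (f m))
    (A β : ℝ) (hA : 0 < A) (hβ : 0 < β)
    (hbound : ∀ m, ∀ w ∈ HSGamma a Λ m, |f m w| ≤ A * ∏ j, maxw β (w j).2)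
    (n : ℕ) (z : Fin n → R3 × R3) (hz : z ∈ HSGamma a Λ n) :
    Summable (fun k : ℕ => (k.factorial : ℝ)⁻¹ *
      ∫ y in gammaExt a Λ n k z, |corrGC a Λ f (n + k) (Fin.append z y)|) ∧
    (∑' k : ℕ, ((-1 : ℝ) ^ k / (k.factorial : ℝ)) *
      ∫ y in gammaExt a Λ n k z, corrGC a Λ f (n + k) (Fin.append z y)) = f n z :=
  stmt5_general a ha Λ hΛo hΛb f hf A β hβ hbound n z hz

end
end

section
/- The creation map Φ is injective on each sign class of the normal relative velocity: Φ restricted to D⁺ = {(s, ω, p̂) ∈ (0,t) × S² × ℝ³ : ω·(p̂ − w) > 0} is injective, and Φ restricted to D⁻ = {(s, ω, p̂) ∈ (0,t) × S² × ℝ³ : ω·(p̂ − w) < 0} is injective. -/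
noncomputable section

/-- The unit sphere `S² ⊂ ℝ³`. -/
abbrev Sph : Type := Metric.sphere (0 : R3) 1

/-- The creation map `Φ(s, ω, p̂) = (x + w s + a ω + (t − s) p̂, p̂)`. -/
noncomputable def creation (a t : ℝ) (x w : R3) : ℝ × Sph × R3 → R3 × R3 :=
  fun u => (x + u.1 • w + a • (u.2.1 : R3) + (t - u.1) • u.2.2, u.2.2)

/-! If `Φ(s₁, ω₁, p̂) = Φ(s₂, ω₂, p̂)` then `a ω₁ − a ω₂ = (s₁ − s₂)(p̂ − w)`. Since `a ω₁` and
`a ω₂` have the same length, their difference is orthogonal to `a (ω₁ + ω₂)`, which forces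
`(s₁ − s₂) ⟪ω₁ + ω₂, p̂ − w⟫ = 0`. On `D⁺` (resp. `D⁻`) both `⟪ωᵢ, p̂ − w⟫` have the same sign,
so the inner product is nonzero, hence `s₁ = s₂` and then `ω₁ = ω₂`. -/

open RealInnerProductSpace

theorem eq_zero_of_sub_eq_smul_of_norm_eq {E : Type*} [NormedAddCommGroup E]
    [InnerProductSpace ℝ E] {y₁ y₂ v : E} {δ : ℝ} (hnorm : ‖y₁‖ = ‖y₂‖) (hsub : y₁ - y₂ = δ • v)
    (hv : ⟪y₁ + y₂, v⟫ ≠ 0) : δ = 0 := by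
  have horth := (real_inner_add_sub_eq_zero_iff y₁ y₂).mpr hnorm
  rw [hsub, inner_smul_right] at horth
  exact (mul_eq_zero.mp horth).resolve_right hv

theorem creation_injOn {a t : ℝ} (ha : a ≠ 0) {x w : R3} {D : Set (ℝ × Sph × R3)}
    (hD : ∀ u₁ ∈ D, ∀ u₂ ∈ D, u₁.2.2 = u₂.2.2 → ⟪(u₁.2.1 : R3) + u₂.2.1, u₁.2.2 - w⟫ ≠ 0) :
    Set.InjOn (creation a t x w) D := by
  rintro ⟨s₁, ω₁, p⟩ hu₁ ⟨s₂, ω₂, p₂⟩ hu₂ heq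
  simp only [creation, Prod.mk.injEq] at heq
  obtain ⟨hpos, rfl⟩ := heq
  have hsub : a • (ω₁ : R3) - a • (ω₂ : R3) = (s₁ - s₂) • (p - w) := by
    linear_combination (norm := module) hpos
  have hnorm : ‖a • (ω₁ : R3)‖ = ‖a • (ω₂ : R3)‖ := by
    simp only [norm_smul, norm_eq_of_mem_sphere]
  have hv : ⟪a • (ω₁ : R3) + a • (ω₂ : R3), p - w⟫ ≠ 0 := by
    rw [← smul_add, real_inner_smul_left]
    exact mul_ne_zero ha (hD _ hu₁ _ hu₂ rfl)
  have hs : s₁ = s₂ := sub_eq_zero.mp (eq_zero_of_sub_eq_smul_of_norm_eq hnorm hsub hv)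
  subst hs
  rw [sub_self, zero_smul, sub_eq_zero] at hsub
  have hω : ω₁ = ω₂ := Subtype.ext (smul_right_injective R3 ha hsub)
  rw [hω]

theorem stmt10_general (a t : ℝ) (ha : 0 < a) (x w : R3) :
    Set.InjOn (creation a t x w)
      {u : ℝ × Sph × R3 | u.1 ∈ Set.Ioo 0 t ∧
        0 < (inner ℝ ((u.2.1 : R3)) (u.2.2 - w) : ℝ)} ∧
    Set.InjOn (creation a t x w)
      {u : ℝ × Sph × R3 | u.1 ∈ Set.Ioo 0 t ∧
        (inner ℝ ((u.2.1 : R3)) (u.2.2 - w) : ℝ) < 0} := by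
  constructor <;> refine creation_injOn ha.ne' fun u₁ ⟨_, h₁⟩ u₂ ⟨_, h₂⟩ hp ↦ ?_ <;>
    rw [inner_add_left] <;> rw [← hp] at h₂
  exacts [(add_pos h₁ h₂).ne', (add_neg h₁ h₂).ne]

/-- The creation map `Φ` is injective on each sign class of the normal relative velocity:
on `D⁺ = {(s,ω,p̂) : s ∈ (0,t), ω·(p̂ − w) > 0}` and on
`D⁻ = {(s,ω,p̂) : s ∈ (0,t), ω·(p̂ − w) < 0}`. -/
theorem stmt10 (a t : ℝ) (ha : 0 < a) (ht : 0 < t) (x w : R3) :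
    Set.InjOn (creation a t x w)
      {u : ℝ × Sph × R3 | u.1 ∈ Set.Ioo 0 t ∧
        0 < (inner ℝ ((u.2.1 : R3)) (u.2.2 - w) : ℝ)} ∧
    Set.InjOn (creation a t x w)
      {u : ℝ × Sph × R3 | u.1 ∈ Set.Ioo 0 t ∧
        (inner ℝ ((u.2.1 : R3)) (u.2.2 - w) : ℝ) < 0} :=
  stmt10_general a t ha x w

end
end

section
/- Fubini-type lower bound for Lebesgue outer measure: let A ⊂ ℝ^n, let ε > 0, and for every z ∈ A let B_z ⊂ ℝ^m be a set with Lebesgue outer measure λ*_m(B_z) ≥ ε. Then the set S = {(z, y) ∈ ℝ^n × ℝ^m : z ∈ A, y ∈ B_z} satisfies λ*_{n+m}(S) ≥ ε · λ*_n(A). In particular, if λ*_n(A) > 0 then λ*_{n+m}(S) > 0. -/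
open MeasureTheory
open scoped ENNReal

/-- Fubini-type lower bound for Lebesgue outer measure: if every fibre `B_z`, `z ∈ A`, has
Lebesgue outer measure at least `ε > 0`, then the set
`S = {(z, y) : z ∈ A, y ∈ B_z}` satisfies `λ*(S) ≥ ε · λ*(A)`; in particular `λ*(S) > 0`
whenever `λ*(A) > 0`. -/
theorem stmt14 (n m : ℕ) (A : Set (Fin n → ℝ)) (ε : ℝ) (hε : 0 < ε)
    (B : (Fin n → ℝ) → Set (Fin m → ℝ))
    (hB : ∀ z ∈ A, ENNReal.ofReal ε ≤ volume (B z)) :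
    ENNReal.ofReal ε * volume A ≤
      volume {p : (Fin n → ℝ) × (Fin m → ℝ) | p.1 ∈ A ∧ p.2 ∈ B p.1} ∧
    (0 < volume A →
      0 < volume {p : (Fin n → ℝ) × (Fin m → ℝ) | p.1 ∈ A ∧ p.2 ∈ B p.1}) := by
  set S : Set ((Fin n → ℝ) × (Fin m → ℝ)) := {p | p.1 ∈ A ∧ p.2 ∈ B p.1}
  have key : ENNReal.ofReal ε * volume A ≤ volume S := by
    set T := toMeasurable volume S with hTdef
    have hST : S ⊆ T := subset_toMeasurable _ _
    have hTmeas : MeasurableSet T := measurableSet_toMeasurable _ _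
    have hvolT : volume T = volume S := measure_toMeasurable S
    -- fibre lower bound
    have hfib : ∀ z ∈ A, ENNReal.ofReal ε ≤ volume (Prod.mk z ⁻¹' T) := by
      intro z hz
      refine (hB z hz).trans (measure_mono ?_)
      intro y hy
      exact hST ⟨hz, hy⟩
    set A' : Set (Fin n → ℝ) := {z | ENNReal.ofReal ε ≤ volume (Prod.mk z ⁻¹' T)}
    have hA'meas : MeasurableSet A' := by
      have : Measurable fun z => volume (Prod.mk z ⁻¹' T) :=
        measurable_measure_prodMk_left hTmeas
      exact this measurableSet_Ici
    have hAA' : A ⊆ A' := fun z hz => hfib z hz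
    have hprod : volume T = ∫⁻ z, volume (Prod.mk z ⁻¹' T) := by
      rw [Measure.volume_eq_prod, Measure.prod_apply hTmeas]
    calc ENNReal.ofReal ε * volume A
        ≤ ENNReal.ofReal ε * volume A' :=
          mul_le_mul_right (measure_mono hAA') _
      _ = ∫⁻ _ in A', ENNReal.ofReal ε := by
          rw [setLIntegral_const, mul_comm]
      _ ≤ ∫⁻ z in A', volume (Prod.mk z ⁻¹' T) :=
          setLIntegral_mono_ae (Measurable.aemeasurable
            (measurable_measure_prodMk_left hTmeas))
            (Filter.Eventually.of_forall fun z hz => hz)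
      _ ≤ ∫⁻ z, volume (Prod.mk z ⁻¹' T) := setLIntegral_le_lintegral _ _
      _ = volume T := hprod.symm
      _ = volume S := hvolT
  refine ⟨key, fun hA => ?_⟩
  have : (0 : ℝ≥0∞) < ENNReal.ofReal ε * volume A :=
    ENNReal.mul_pos (by simpa using hε) hA.ne'
  exact this.trans_le key
end

section
/- Resummation identity for the tree expansion: fix integers N > n ≥ 1 and let V assign a real number V(T) to every n-particle tree graph T with at most N − n nodes. For an (n+1)-particle tree T = (j_1, …, j_m) with m nodes (so j_k ∈ {1, …, n+k}), let ℓ(T) = min{ k : j_k = n+1 }, with ℓ(T) = m+1 if no j_k equals n+1. If ℓ(T) = m+1, let T''(T) be the n-particle m-node tree (f''(j_1), …, f''(j_m)), where f''(j) = j for j ≤ n and f''(j) = j − 1 for j ≥ n+2. For 1 ≤ k ≤ ℓ(T) and 1 ≤ i ≤ n+k−1, let T'(T, k, i) be the n-particle (m+1)-node tree (f'(j_1), …, f'(j_{k−1}), i, f'(j_k), …, f'(j_m)), where f'(j) = j if j ≤ n or j ≥ n+k+1, f'(j) = j − 1 if n+2 ≤ j ≤ n+k, and f'(n+1) = n+k.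 Then Σ_{m=0}^{N−n−1} Σ_{T an (n+1)-particle m-node tree} [ 𝟙{ℓ(T) = m+1} · (N − n − m) · V(T''(T)) + Σ_{k=1}^{ℓ(T)} Σ_{i=1}^{n+k−1} V(T'(T, k, i)) ] = (N − n) Σ_{m=0}^{N−n} Σ_{T an n-particle m-node tree} V(T). -/
noncomputable section

/-!
Trees are encoded `0`-based: an `m`-node, `n`-particle tree is a dependent function
`T : (k : Fin m) → Fin (n + k)`, the entry `T k` representing the progenitor label
`j_{k+1} = (T k) + 1 ∈ {1, …, n + k}` of the node `k + 1` (`1`-based).  Likewise an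
`m`-node, `(n+1)`-particle tree is `T : (k : Fin m) → Fin (n + 1 + k)`, with
`j_{k+1} = (T k) + 1 ∈ {1, …, n + 1 + k}`.
-/

/-- `jval n T r`: the `1`-based progenitor label `j_{r+1}` stored at the `0`-based
position `r` of the `(n+1)`-particle tree `T` (junk value `0` out of range). -/
def jval (n : ℕ) {m : ℕ} (T : (r : Fin m) → Fin (n + 1 + (r : ℕ))) (r : ℕ) : ℕ :=
  if h : r < m then (T ⟨r, h⟩ : ℕ) + 1 else 0

/-- `ℓ(T)`: the (`1`-based) index of the first node of the `(n+1)`-particle tree `T`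
whose progenitor is particle `n+1` (i.e. the first `r` with `j_{r+1} = n + 1`, that is
`(T r : ℕ) = n`), and `m + 1` if there is no such node. -/
def ellT (n : ℕ) {m : ℕ} (T : (r : Fin m) → Fin (n + 1 + (r : ℕ))) : ℕ :=
  sInf ({r : ℕ | ∃ h : r < m, (T ⟨r, h⟩ : ℕ) = n} ∪ {m}) + 1

/-- The relabelling `f'` of progenitor labels used when the root line `n+1` is attached
at the new node `k`: `f'(j) = j` if `j ≤ n` or `j ≥ n+k+1`, `f'(j) = j − 1` if
`n+2 ≤ j ≤ n+k`, and `f'(n+1) = n+k`. -/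
def fmap (n k j : ℕ) : ℕ :=
  if j ≤ n then j
  else if j = n + 1 then n + k
  else if j ≤ n + k then j - 1
  else j

/-- Conversion of a `1`-based progenitor label `j ∈ {1, …, n + p}` into the `0`-based
entry `j − 1 : Fin (n + p)` (junk value `0` if out of range). -/
def toFinEntry (n : ℕ) (hn : 0 < n) (p : ℕ) (j : ℕ) : Fin (n + p) :=
  if h : j - 1 < n + p then ⟨j - 1, h⟩ else ⟨0, by omega⟩

/-- The `n`-particle `m`-node tree `T''` obtained from an `(n+1)`-particle `m`-node tree
`T` (with trivial `(n+1)`-th root line) by discarding that line: its labels are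
`f''(j_1), …, f''(j_m)` with `f''(j) = j` for `j ≤ n` and `f''(j) = j − 1` for `j ≥ n+2`. -/
def treeDrop (n : ℕ) (hn : 0 < n) {m : ℕ} (T : (r : Fin m) → Fin (n + 1 + (r : ℕ))) :
    (p : Fin m) → Fin (n + (p : ℕ)) :=
  fun p => toFinEntry n hn p
    (if (T p : ℕ) + 1 ≤ n then (T p : ℕ) + 1 else (T p : ℕ))

/-- The `n`-particle `(m+1)`-node tree `T'` obtained from an `(n+1)`-particle `m`-node
tree `T` by attaching the root line `n+1` to line `i` at a new node in (`1`-based)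
position `k`: its labels are `f'(j_1), …, f'(j_{k−1}), i, f'(j_k), …, f'(j_m)`. -/
def treeInsert (n : ℕ) (hn : 0 < n) {m : ℕ} (k i : ℕ)
    (T : (r : Fin m) → Fin (n + 1 + (r : ℕ))) :
    (p : Fin (m + 1)) → Fin (n + (p : ℕ)) :=
  fun p => toFinEntry n hn p
    (if (p : ℕ) + 1 < k then fmap n k (jval n T (p : ℕ))
     else if (p : ℕ) + 1 = k then i
     else fmap n k (jval n T ((p : ℕ) - 1)))

/-! ### Auxiliary lemmas -/

lemma toFinEntry_val {n : ℕ} (hn : 0 < n) (p j : ℕ) :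
    ((toFinEntry n hn p j : Fin (n + p)) : ℕ) = if j - 1 < n + p then j - 1 else 0 := by
  unfold toFinEntry; split_ifs <;> rfl

lemma jval_pos {n m : ℕ} {T : (r : Fin m) → Fin (n + 1 + (r : ℕ))} {r : ℕ} (h : r < m) :
    jval n T r = (T ⟨r, h⟩ : ℕ) + 1 := by
  unfold jval; rw [dif_pos h]

lemma Tval_eq {n m : ℕ} (T : (r : Fin m) → Fin (n + 1 + (r : ℕ))) {a : ℕ} (ha : a < m)
    (b : Fin m) (h : a = (b : ℕ)) : (T ⟨a, ha⟩ : ℕ) = (T b : ℕ) := by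
  rcases b with ⟨bv, hb⟩
  have h' : a = bv := h
  subst h'; rfl

lemma Sval_eq {n m : ℕ} (S : (p : Fin m) → Fin (n + (p : ℕ))) {a : ℕ} (ha : a < m)
    (b : Fin m) (h : a = (b : ℕ)) : (S ⟨a, ha⟩ : ℕ) = (S b : ℕ) := by
  rcases b with ⟨bv, hb⟩
  have h' : a = bv := h
  subst h'; rfl

/-! ### `ellT` lemmas -/

lemma ellT_le {n m : ℕ} (T : (r : Fin m) → Fin (n + 1 + (r : ℕ))) : ellT n T ≤ m + 1 := by
  have h : m ∈ ({r : ℕ | ∃ h : r < m, (T ⟨r, h⟩ : ℕ) = n} ∪ {m}) :=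
    Set.mem_union_right _ rfl
  have := Nat.sInf_le h
  unfold ellT; omega

lemma le_ellT {n m : ℕ} {T : (r : Fin m) → Fin (n + 1 + (r : ℕ))} {k : ℕ} (hk : k ≤ m + 1)
    (h : ∀ r (hr : r < m), r + 1 < k → (T ⟨r, hr⟩ : ℕ) ≠ n) : k ≤ ellT n T := by
  unfold ellT
  have hmem : sInf ({r : ℕ | ∃ h : r < m, (T ⟨r, h⟩ : ℕ) = n} ∪ {m})
      ∈ ({r : ℕ | ∃ h : r < m, (T ⟨r, h⟩ : ℕ) = n} ∪ {m}) :=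
    Nat.sInf_mem ⟨m, Set.mem_union_right _ rfl⟩
  rw [Set.mem_union] at hmem
  rcases hmem with ⟨hr, hv⟩ | hm
  · by_contra hc
    push_neg at hc
    exact h _ hr (by omega) hv
  · have := Set.mem_singleton_iff.mp hm
    omega

lemma ellT_ge_imp {n m : ℕ} {T : (r : Fin m) → Fin (n + 1 + (r : ℕ))} {k : ℕ}
    (h : k ≤ ellT n T) : ∀ r (hr : r < m), r + 1 < k → (T ⟨r, hr⟩ : ℕ) ≠ n := by
  intro r hr hrk hv
  have h2 : sInf ({r : ℕ | ∃ h : r < m, (T ⟨r, h⟩ : ℕ) = n} ∪ {m}) ≤ r :=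
    Nat.sInf_le (Set.mem_union_left _ ⟨hr, hv⟩)
  unfold ellT at h; omega

lemma ellT_eq_iff {n m : ℕ} {T : (r : Fin m) → Fin (n + 1 + (r : ℕ))} :
    ellT n T = m + 1 ↔ ∀ r (hr : r < m), (T ⟨r, hr⟩ : ℕ) ≠ n := by
  constructor
  · intro h r hr
    exact ellT_ge_imp (k := m + 1) (le_of_eq h.symm) r hr (by omega)
  · intro h
    have h1 := ellT_le (n := n) T
    have h2 := le_ellT (T := T) (k := m + 1) le_rfl (fun r hr _ => h r hr)
    omega

/-! ### the drop/lift bijection -/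

def liftTree {n m : ℕ} (S : (p : Fin m) → Fin (n + (p : ℕ))) :
    (r : Fin m) → Fin (n + 1 + (r : ℕ)) :=
  fun r =>
    if h : (S r : ℕ) < n then ⟨(S r : ℕ), by omega⟩
    else ⟨(S r : ℕ) + 1, by have := (S r).isLt; omega⟩

lemma liftTree_val {n m : ℕ} (S : (p : Fin m) → Fin (n + (p : ℕ))) (r : Fin m) :
    ((liftTree S r : Fin _) : ℕ) = if (S r : ℕ) < n then (S r : ℕ) else (S r : ℕ) + 1 := by
  unfold liftTree; split_ifs <;> rfl

lemma treeDrop_val {n m : ℕ} (hn : 0 < n) (T : (r : Fin m) → Fin (n + 1 + (r : ℕ)))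
    (p : Fin m) :
    ((treeDrop n hn T p : Fin _) : ℕ) = if (T p : ℕ) < n then (T p : ℕ) else (T p : ℕ) - 1 := by
  have h1 := (T p).isLt
  unfold treeDrop
  rw [toFinEntry_val]
  split_ifs <;> omega

lemma drop_lift {n m : ℕ} (hn : 0 < n) (S : (p : Fin m) → Fin (n + (p : ℕ))) :
    treeDrop n hn (liftTree S) = S := by
  funext p
  apply Fin.ext
  rw [treeDrop_val, liftTree_val]
  have := (S p).isLt
  split_ifs <;> omega

lemma lift_drop {n m : ℕ} (hn : 0 < n) (T : (r : Fin m) → Fin (n + 1 + (r : ℕ)))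
    (h : ∀ r (hr : r < m), (T ⟨r, hr⟩ : ℕ) ≠ n) :
    liftTree (treeDrop n hn T) = T := by
  funext r
  apply Fin.ext
  rw [liftTree_val, treeDrop_val]
  have h1 := (T r).isLt
  have h2 : (T r : ℕ) ≠ n := h r r.isLt
  split_ifs <;> omega

lemma ellT_lift {n m : ℕ} (hn : 0 < n) (S : (p : Fin m) → Fin (n + (p : ℕ))) :
    ellT n (liftTree S) = m + 1 := by
  rw [ellT_eq_iff]
  intro r hr
  rw [liftTree_val]
  have := (S ⟨r, hr⟩).isLt
  split_ifs <;> omega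

lemma lemA {n : ℕ} (hn : 0 < n) (m : ℕ) (c : ℝ) (W : ((p : Fin m) → Fin (n + (p : ℕ))) → ℝ) :
    ∑ T : (r : Fin m) → Fin (n + 1 + (r : ℕ)),
      (if ellT n T = m + 1 then c else 0) * W (treeDrop n hn T)
    = c * ∑ S : (p : Fin m) → Fin (n + (p : ℕ)), W S := by
  rw [Finset.mul_sum]
  have h1 : ∀ T : (r : Fin m) → Fin (n + 1 + (r : ℕ)),
      (if ellT n T = m + 1 then c else 0) * W (treeDrop n hn T)
      = if ellT n T = m + 1 then c * W (treeDrop n hn T) else 0 := by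
    intro T; split <;> simp
  simp only [h1]
  rw [← Finset.sum_filter]
  refine Finset.sum_bij' (fun T _ => treeDrop n hn T) (fun S _ => liftTree S) ?_ ?_ ?_ ?_ ?_
  · intro T hT; exact Finset.mem_univ _
  · intro S _
    simp only [Finset.mem_filter, Finset.mem_univ, true_and]
    exact ellT_lift hn S
  · intro T hT
    simp only [Finset.mem_filter, Finset.mem_univ, true_and] at hT
    exact lift_drop hn T (ellT_eq_iff.mp hT)
  · intro S _; exact drop_lift hn S
  · intro T hT; rfl

/-! ### the insert/inverse bijection -/

def ginv (n k s : ℕ) : ℕ :=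
  if s < n then s else if s + 2 ≤ n + k then s + 1 else if s + 1 = n + k then n else s

def invTree (n : ℕ) {m : ℕ} (k : ℕ) (S : (p : Fin (m + 1)) → Fin (n + (p : ℕ))) :
    (r : Fin m) → Fin (n + 1 + (r : ℕ)) :=
  fun r =>
    if h : (r : ℕ) + 1 < k then
      ⟨ginv n k (S ⟨(r : ℕ), Nat.lt_succ_of_lt r.isLt⟩ : ℕ), by
        have := (S ⟨(r : ℕ), Nat.lt_succ_of_lt r.isLt⟩).isLt
        simp only [Fin.val_mk] at this
        unfold ginv; split_ifs <;> omega⟩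
    else
      ⟨ginv n k (S ⟨(r : ℕ) + 1, Nat.succ_lt_succ r.isLt⟩ : ℕ), by
        have := (S ⟨(r : ℕ) + 1, Nat.succ_lt_succ r.isLt⟩).isLt
        simp only [Fin.val_mk] at this
        unfold ginv; split_ifs <;> omega⟩

lemma invTree_val {n m : ℕ} (k : ℕ) (S : (p : Fin (m + 1)) → Fin (n + (p : ℕ))) (r : Fin m) :
    ((invTree n k S r : Fin _) : ℕ) =
      if (r : ℕ) + 1 < k then ginv n k (S ⟨(r : ℕ), Nat.lt_succ_of_lt r.isLt⟩ : ℕ)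
      else ginv n k (S ⟨(r : ℕ) + 1, Nat.succ_lt_succ r.isLt⟩ : ℕ) := by
  unfold invTree; split_ifs <;> rfl

lemma treeInsert_val {n m : ℕ} (hn : 0 < n) (k i : ℕ)
    (T : (r : Fin m) → Fin (n + 1 + (r : ℕ))) (p : Fin (m + 1)) :
    ((treeInsert n hn k i T p : Fin _) : ℕ) =
      if (if (p : ℕ) + 1 < k then fmap n k (jval n T (p : ℕ))
          else if (p : ℕ) + 1 = k then i
          else fmap n k (jval n T ((p : ℕ) - 1))) - 1 < n + (p : ℕ)
      then (if (p : ℕ) + 1 < k then fmap n k (jval n T (p : ℕ))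
          else if (p : ℕ) + 1 = k then i
          else fmap n k (jval n T ((p : ℕ) - 1))) - 1
      else 0 := by
  unfold treeInsert; rw [toFinEntry_val]

lemma insert_val_lt {n m : ℕ} (hn : 0 < n) (k i : ℕ)
    (T : (r : Fin m) → Fin (n + 1 + (r : ℕ))) {r : ℕ} (hr : r < m) (hpf : r < m + 1)
    (h : r + 1 < k) :
    ((treeInsert n hn k i T ⟨r, hpf⟩ : Fin _) : ℕ) =
      if fmap n k ((T ⟨r, hr⟩ : ℕ) + 1) - 1 < n + r
      then fmap n k ((T ⟨r, hr⟩ : ℕ) + 1) - 1 else 0 := by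
  rw [treeInsert_val]
  simp only [Fin.val_mk]
  rw [if_pos h, jval_pos hr]

lemma insert_val_eq {n m : ℕ} (hn : 0 < n) (k i : ℕ)
    (T : (r : Fin m) → Fin (n + 1 + (r : ℕ))) {r : ℕ} (hpf : r < m + 1)
    (h : r + 1 = k) :
    ((treeInsert n hn k i T ⟨r, hpf⟩ : Fin _) : ℕ) =
      if i - 1 < n + r then i - 1 else 0 := by
  rw [treeInsert_val]
  simp only [Fin.val_mk]
  rw [if_neg (show ¬(r + 1 < k) by omega), if_pos h]

lemma insert_val_gt {n m : ℕ} (hn : 0 < n) (k i : ℕ)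
    (T : (r : Fin m) → Fin (n + 1 + (r : ℕ))) {r : ℕ} (hr : r - 1 < m) (hpf : r < m + 1)
    (h : k < r + 1) :
    ((treeInsert n hn k i T ⟨r, hpf⟩ : Fin _) : ℕ) =
      if fmap n k ((T ⟨r - 1, hr⟩ : ℕ) + 1) - 1 < n + r
      then fmap n k ((T ⟨r - 1, hr⟩ : ℕ) + 1) - 1 else 0 := by
  rw [treeInsert_val]
  simp only [Fin.val_mk]
  rw [if_neg (show ¬(r + 1 < k) by omega), if_neg (show ¬(r + 1 = k) by omega), jval_pos hr]

lemma invTree_insert {n m k : ℕ} (hn : 0 < n) (i : ℕ) (hk1 : 1 ≤ k) (hk2 : k ≤ m + 1)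
    (T : (r : Fin m) → Fin (n + 1 + (r : ℕ))) (hl : k ≤ ellT n T) :
    invTree n k (treeInsert n hn k i T) = T := by
  funext r
  apply Fin.ext
  rw [invTree_val]
  have hT := (T r).isLt
  by_cases h : (r : ℕ) + 1 < k
  · rw [if_pos h]
    rw [insert_val_lt hn k i T r.isLt _ h]
    rw [Tval_eq T r.isLt r rfl]
    have ht : (T r : ℕ) ≠ n := ellT_ge_imp hl (r : ℕ) r.isLt h
    unfold ginv fmap
    split_ifs <;> omega
  · rw [if_neg h]
    have hrm : (r : ℕ) + 1 - 1 < m := by have := r.isLt; omega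
    rw [insert_val_gt hn k i T hrm _ (by omega)]
    rw [Tval_eq T hrm r (by omega)]
    unfold ginv fmap
    split_ifs <;> omega

lemma insert_invTree {n m k : ℕ} (hn : 0 < n) (hk1 : 1 ≤ k) (hk2 : k ≤ m + 1)
    (S : (p : Fin (m + 1)) → Fin (n + (p : ℕ))) :
    treeInsert n hn k ((S ⟨k - 1, by omega⟩ : Fin _) : ℕ).succ (invTree n k S) = S := by
  funext p
  apply Fin.ext
  have hS := (S p).isLt
  rcases lt_trichotomy ((p : ℕ) + 1) k with hpk | hpk | hpk
  · rw [treeInsert_val, if_pos hpk, jval_pos (show (p : ℕ) < m by have := p.isLt; omega)]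
    rw [invTree_val]
    simp only [Fin.val_mk]
    rw [if_pos hpk]
    rw [Sval_eq S _ p rfl]
    unfold ginv fmap
    split_ifs <;> omega
  · rw [treeInsert_val, if_neg (show ¬((p : ℕ) + 1 < k) by omega), if_pos hpk]
    rw [Nat.succ_eq_add_one, Sval_eq S _ p (by omega)]
    split_ifs <;> omega
  · rw [treeInsert_val, if_neg (show ¬((p : ℕ) + 1 < k) by omega),
        if_neg (show ¬((p : ℕ) + 1 = k) by omega)]
    have hpm : (p : ℕ) - 1 < m := by have := p.isLt; omega
    rw [jval_pos hpm, invTree_val]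
    simp only [Fin.val_mk]
    rw [if_neg (show ¬((p : ℕ) - 1 + 1 < k) by omega)]
    rw [Sval_eq S _ p (by omega)]
    unfold ginv fmap
    split_ifs <;> omega

lemma ellT_invTree {n m k : ℕ} (hk1 : 1 ≤ k) (hk2 : k ≤ m + 1)
    (S : (p : Fin (m + 1)) → Fin (n + (p : ℕ))) : k ≤ ellT n (invTree n k S) := by
  refine le_ellT hk2 ?_
  intro r hr hrk
  rw [invTree_val]
  simp only [Fin.val_mk]
  rw [if_pos hrk]
  have := (S ⟨r, Nat.lt_succ_of_lt hr⟩).isLt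
  simp only [Fin.val_mk] at this
  unfold ginv
  split_ifs <;> omega

lemma lemBk {n : ℕ} (hn : 0 < n) {m k : ℕ} (hk : k ∈ Finset.Icc 1 (m + 1))
    (W : ((p : Fin (m + 1)) → Fin (n + (p : ℕ))) → ℝ) :
    (∑ T : (r : Fin m) → Fin (n + 1 + (r : ℕ)),
      if k ≤ ellT n T then ∑ i ∈ Finset.Icc 1 (n + k - 1), W (treeInsert n hn k i T) else 0)
    = ∑ S : (p : Fin (m + 1)) → Fin (n + (p : ℕ)), W S := by
  rw [Finset.mem_Icc] at hk
  obtain ⟨hk1, hk2⟩ := hk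
  rw [← Finset.sum_filter, ← Finset.sum_product']
  refine Finset.sum_bij' (fun Ti _ => treeInsert n hn k Ti.2 Ti.1)
    (fun S _ => (invTree n k S, ((S ⟨k - 1, by omega⟩ : Fin _) : ℕ).succ)) ?_ ?_ ?_ ?_ ?_
  · intro Ti _; exact Finset.mem_univ _
  · intro S _
    rw [Finset.mem_product, Finset.mem_filter, Finset.mem_Icc]
    refine ⟨⟨Finset.mem_univ _, ellT_invTree hk1 hk2 S⟩, ?_, ?_⟩
    · exact Nat.succ_le_succ (Nat.zero_le _)
    · exact le_trans (Nat.succ_le_of_lt (S ⟨k - 1, by omega⟩).isLt)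
        (show n + (k - 1) ≤ n + k - 1 by omega)
  · rintro ⟨T, i⟩ hTi
    rw [Finset.mem_product, Finset.mem_filter, Finset.mem_Icc] at hTi
    obtain ⟨⟨-, hl⟩, hi1, hi2⟩ := hTi
    refine Prod.ext ?_ ?_
    · exact invTree_insert hn i hk1 hk2 T hl
    · show ((treeInsert n hn k i T ⟨k - 1, by omega⟩ : Fin _) : ℕ).succ = i
      rw [insert_val_eq hn k i T (by omega) (by omega)]
      rw [if_pos (by omega)]
      omega
  · intro S _
    exact insert_invTree hn hk1 hk2 S
  · intro Ti _; rfl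

lemma lemB {n : ℕ} (hn : 0 < n) (m : ℕ)
    (W : ((p : Fin (m + 1)) → Fin (n + (p : ℕ))) → ℝ) :
    (∑ T : (r : Fin m) → Fin (n + 1 + (r : ℕ)),
      ∑ k ∈ Finset.Icc 1 (ellT n T), ∑ i ∈ Finset.Icc 1 (n + k - 1),
        W (treeInsert n hn k i T))
    = ((m : ℝ) + 1) * ∑ S : (p : Fin (m + 1)) → Fin (n + (p : ℕ)), W S := by
  have hset : ∀ T : (r : Fin m) → Fin (n + 1 + (r : ℕ)),
      Finset.Icc 1 (ellT n T)
        = (Finset.Icc 1 (m + 1)).filter (fun k => k ≤ ellT n T) := by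
    intro T
    ext x
    have := ellT_le (n := n) T
    simp only [Finset.mem_Icc, Finset.mem_filter]
    omega
  calc (∑ T : (r : Fin m) → Fin (n + 1 + (r : ℕ)),
      ∑ k ∈ Finset.Icc 1 (ellT n T), ∑ i ∈ Finset.Icc 1 (n + k - 1),
        W (treeInsert n hn k i T))
      = ∑ T : (r : Fin m) → Fin (n + 1 + (r : ℕ)), ∑ k ∈ Finset.Icc 1 (m + 1),
          if k ≤ ellT n T then ∑ i ∈ Finset.Icc 1 (n + k - 1), W (treeInsert n hn k i T)
          else 0 := by
        refine Finset.sum_congr rfl fun T _ => ?_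
        rw [hset T, Finset.sum_filter]
    _ = ∑ k ∈ Finset.Icc 1 (m + 1), ∑ T : (r : Fin m) → Fin (n + 1 + (r : ℕ)),
          if k ≤ ellT n T then ∑ i ∈ Finset.Icc 1 (n + k - 1), W (treeInsert n hn k i T)
          else 0 := Finset.sum_comm
    _ = ∑ k ∈ Finset.Icc 1 (m + 1),
          ∑ S : (p : Fin (m + 1)) → Fin (n + (p : ℕ)), W S :=
        Finset.sum_congr rfl fun k hk => lemBk hn hk W
    _ = ((m : ℝ) + 1) * ∑ S : (p : Fin (m + 1)) → Fin (n + (p : ℕ)), W S := by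
        rw [Finset.sum_const, Nat.card_Icc, nsmul_eq_mul]
        push_cast
        ring

lemma arith (M : ℕ) (W : ℕ → ℝ) :
    (∑ m ∈ Finset.range M, (((M - m : ℕ) : ℝ) * W m + ((m : ℝ) + 1) * W (m + 1)))
    = (M : ℝ) * ∑ m ∈ Finset.range (M + 1), W m := by
  rw [Finset.sum_add_distrib, Finset.mul_sum]
  have e2 : ∑ m ∈ Finset.range M, ((m : ℝ) + 1) * W (m + 1)
      = ∑ m ∈ Finset.range (M + 1), (m : ℝ) * W m := by
    rw [Finset.sum_range_succ' (fun m => (m : ℝ) * W m) M]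
    push_cast
    simp
  have e1 : ∑ m ∈ Finset.range M, ((M - m : ℕ) : ℝ) * W m
      = ∑ m ∈ Finset.range (M + 1), ((M - m : ℕ) : ℝ) * W m := by
    rw [Finset.sum_range_succ, Nat.sub_self]
    simp
  rw [e1, e2, ← Finset.sum_add_distrib]
  refine Finset.sum_congr rfl fun m hm => ?_
  rw [Finset.mem_range] at hm
  have hmM : m ≤ M := by omega
  have hc : ((M - m : ℕ) : ℝ) = (M : ℝ) - (m : ℝ) := Nat.cast_sub hmM
  rw [hc]; ring

/-- Resummation identity for the tree expansion: for any assignment `V` of real values to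
`n`-particle tree graphs,
`Σ_{m=0}^{N−n−1} Σ_{T (n+1)-particle m-node tree} [𝟙{ℓ(T) = m+1} (N−n−m) V(T'') +
Σ_{k=1}^{ℓ(T)} Σ_{i=1}^{n+k−1} V(T'(T,k,i))] = (N−n) Σ_{m=0}^{N−n} Σ_{T n-particle m-node tree} V(T)`. -/
theorem stmt16 (n N : ℕ) (hn : 0 < n) (hN : n < N)
    (V : (m : ℕ) → ((k : Fin m) → Fin (n + (k : ℕ))) → ℝ) :
    (∑ m ∈ Finset.range (N - n),
      ∑ T : (r : Fin m) → Fin (n + 1 + (r : ℕ)),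
        ((if ellT n T = m + 1 then ((N - n - m : ℕ) : ℝ) else 0) * V m (treeDrop n hn T) +
          ∑ k ∈ Finset.Icc 1 (ellT n T), ∑ i ∈ Finset.Icc 1 (n + k - 1),
            V (m + 1) (treeInsert n hn k i T))) =
    ((N - n : ℕ) : ℝ) *
      ∑ m ∈ Finset.range (N - n + 1),
        ∑ T : (k : Fin m) → Fin (n + (k : ℕ)), V m T := by
  have key : ∀ m : ℕ,
      (∑ T : (r : Fin m) → Fin (n + 1 + (r : ℕ)),
        ((if ellT n T = m + 1 then ((N - n - m : ℕ) : ℝ) else 0) * V m (treeDrop n hn T) +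
          ∑ k ∈ Finset.Icc 1 (ellT n T), ∑ i ∈ Finset.Icc 1 (n + k - 1),
            V (m + 1) (treeInsert n hn k i T)))
      = ((N - n - m : ℕ) : ℝ) * (∑ S : (p : Fin m) → Fin (n + (p : ℕ)), V m S)
        + ((m : ℝ) + 1) * (∑ S : (p : Fin (m + 1)) → Fin (n + (p : ℕ)), V (m + 1) S) := by
    intro m
    rw [Finset.sum_add_distrib, lemA hn m ((N - n - m : ℕ) : ℝ) (V m), lemB hn m (V (m + 1))]
  rw [Finset.sum_congr rfl fun m _ => key m]
  exact arith (N - n) (fun m => ∑ S : (p : Fin m) → Fin (n + (p : ℕ)), V m S)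

end
end
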